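/- Let ≿ be a niveloidal preference on 𝓕 with nonconstant affine utility index u : X → ℝ (with 0 in the interior of u(X)) representing it as in the maxmin representation. Define C* = {c ∈ 𝒞 : min_{p∈Δ}(∫ u(f) dp + c(p)) ≤ u(x_f) for all f ∈ 𝓕}, where x_f is a certainty equivalent of f. Then: (a) C* is grounded; (b) for every f ∈ 𝓕, max_{c∈C*} min_{p∈Δ}(∫ u(f) dp + c(p)) = u(x_f), so C* satisfies the maxmin representation of ≿; and (c) every grounded subset C ⊆ 𝒞 satisfying the maxmin representation of ≿ with the same u is contained in C*; thus C* is the unique maximal such grounded subset. -/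

import Mathlib

/-!
A grounded `C` representing `≿` assigns to every act `f` the value `u (x_f)`: compare `f` with
the constant act `x_f`, on which a grounded functional returns the utility of the constant.
Hence `C ⊆ C*`, and since every `c ∈ C*` is bounded by `u (x_f)` at `f`, the maxmin value over
`C*` is squeezed to `u (x_f)`; this gives the representation, and on constant acts it gives
groundedness. The minima over `Δ` are attained because `Δ` is weak* compact and
`p ↦ ∫ φ dp + c p` is lower semicontinuous.
-/

open scoped Pointwise
open MeasureTheory

namespace Paper

variable {S V : Type*}

/-- An algebra of subsets of `S` (the events `Σ`). -/
structure IsSetAlg (𝓐 : Set (Set S)) : Prop where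
  empty_mem : ∅ ∈ 𝓐
  compl_mem : ∀ A ∈ 𝓐, Aᶜ ∈ 𝓐
  union_mem : ∀ A ∈ 𝓐, ∀ B ∈ 𝓐, A ∪ B ∈ 𝓐

/-- `B₀(Σ)`: real-valued `Σ`-measurable simple functions. -/
def IsSimpleFn (𝓐 : Set (Set S)) (φ : S → ℝ) : Prop :=
  (Set.range φ).Finite ∧ ∀ t : ℝ, φ ⁻¹' {t} ∈ 𝓐

open Classical in
/-- The integral of a simple function with respect to a finitely additive set function. -/
noncomputable def fint (p : Set S → ℝ) (φ : S → ℝ) : ℝ :=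
  if h : (Set.range φ).Finite then ∑ t ∈ h.toFinset, t * p (φ ⁻¹' {t}) else 0

/-- `Δ`: the finitely additive probabilities on `Σ` (canonically extended by `0` off `Σ`). -/
def Δset (𝓐 : Set (Set S)) : Set (Set S → ℝ) :=
  {p | p Set.univ = 1 ∧ (∀ A ∈ 𝓐, 0 ≤ p A) ∧
    (∀ A ∈ 𝓐, ∀ B ∈ 𝓐, Disjoint A B → p (A ∪ B) = p A + p B) ∧
    ∀ A : Set S, A ∉ 𝓐 → p A = 0}

/-- The weak* topology `σ(Δ, B₀(Σ))`, i.e. the topology induced by the evaluation maps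
`p ↦ ∫ φ dp`, `φ ∈ B₀(Σ)`. -/
noncomputable def weakStar (𝓐 : Set (Set S)) : TopologicalSpace (Set S → ℝ) :=
  TopologicalSpace.induced
    (fun p => fun φ : {φ : S → ℝ // IsSimpleFn 𝓐 φ} => fint p φ.1)
    Pi.topologicalSpace

/-- `𝒞`: the weak*-lower semicontinuous convex functions `c : Δ → (-∞, ∞]`. -/
def Cscr (𝓐 : Set (Set S)) : Set ((Set S → ℝ) → EReal) :=
  {c | (∀ p ∈ Δset 𝓐, ⊥ < c p) ∧
    (@LowerSemicontinuousOn (Set S → ℝ) EReal (weakStar 𝓐) _ c (Δset 𝓐)) ∧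
    ∀ p ∈ Δset 𝓐, ∀ q ∈ Δset 𝓐, ∀ a b : ℝ, 0 ≤ a → 0 ≤ b → a + b = 1 →
      c (a • p + b • q) ≤ (a : EReal) * c p + (b : EReal) * c q}

/-- A subset `C ⊆ 𝒞` is grounded if `sup_{c ∈ C} min_{p ∈ Δ} c p = 0`. -/
def Grounded (𝓐 : Set (Set S)) (C : Set ((Set S → ℝ) → EReal)) : Prop :=
  (⨆ c ∈ C, ⨅ p ∈ Δset 𝓐, c p) = 0

/-- `min_{p ∈ Δ} (∫ φ dp + c p)`. -/
noncomputable def minVal (𝓐 : Set (Set S)) (c : (Set S → ℝ) → EReal) (φ : S → ℝ) : EReal :=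
  ⨅ p ∈ Δset 𝓐, ((fint p φ : EReal) + c p)

/-- `max_{q ∈ Δ} (∫ φ dq - b q)`. -/
noncomputable def maxVal (𝓐 : Set (Set S)) (b : (Set S → ℝ) → EReal) (φ : S → ℝ) : EReal :=
  ⨆ q ∈ Δset 𝓐, ((fint q φ : EReal) - b q)

/-- `max_{c ∈ C} min_{p ∈ Δ} (∫ φ dp + c p)`. -/
noncomputable def maxminVal (𝓐 : Set (Set S)) (C : Set ((Set S → ℝ) → EReal))
    (φ : S → ℝ) : EReal :=
  ⨆ c ∈ C, minVal 𝓐 c φ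

/-- `min_{b ∈ B} max_{q ∈ Δ} (∫ φ dq - b q)`. -/
noncomputable def minmaxVal (𝓐 : Set (Set S)) (B : Set ((Set S → ℝ) → EReal))
    (φ : S → ℝ) : EReal :=
  ⨅ b ∈ B, maxVal 𝓐 b φ

/-- `min_{p ∈ P} ∫ φ dp`. -/
noncomputable def minPVal (P : Set (Set S → ℝ)) (φ : S → ℝ) : EReal :=
  ⨅ p ∈ P, (fint p φ : EReal)

/-- `max_{q ∈ Q} ∫ φ dq`. -/
noncomputable def maxQVal (Q : Set (Set S → ℝ)) (φ : S → ℝ) : EReal :=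
  ⨆ q ∈ Q, (fint q φ : EReal)

/-- `max_{P ∈ Pfam} min_{p ∈ P} ∫ φ dp`. -/
noncomputable def maxminPVal (Pfam : Set (Set (Set S → ℝ))) (φ : S → ℝ) : EReal :=
  ⨆ P ∈ Pfam, minPVal P φ

/-- `min_{Q ∈ Qfam} max_{q ∈ Q} ∫ φ dq`. -/
noncomputable def minmaxQVal (Qfam : Set (Set (Set S → ℝ))) (φ : S → ℝ) : EReal :=
  ⨅ Q ∈ Qfam, maxQVal Q φ

open Classical in
/-- The convex-analytic indicator `δ_P` of a set `P`. -/
noncomputable def ind (P : Set (Set S → ℝ)) : (Set S → ℝ) → EReal :=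
  fun p => if p ∈ P then (0 : EReal) else ⊤

variable [AddCommGroup V] [Module ℝ V]

/-- `𝓕`: the simple acts, i.e. `Σ`-measurable maps `f : S → X` with finitely many values. -/
def Acts (𝓐 : Set (Set S)) (X : Set V) : Set (S → V) :=
  {f | (∀ s, f s ∈ X) ∧ (Set.range f).Finite ∧ ∀ v : V, f ⁻¹' {v} ∈ 𝓐}

/-- The constant act with value `x`. -/
def constAct (x : V) : S → V := fun _ : S => x

/-- The mixture `α f + (1 - α) g` of two acts, defined statewise. -/
def mix (α : ℝ) (f g : S → V) : S → V := fun s => α • f s + (1 - α) • g s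

/-- The statewise utility `u ∘ f` of an act. -/
def uAct (u : V → ℝ) (f : S → V) : S → ℝ := fun s => u (f s)

/-- `u : X → ℝ` is nonconstant and affine on `X`. -/
def IsNonconstAffine (X : Set V) (u : V → ℝ) : Prop :=
  (∀ x ∈ X, ∀ y ∈ X, ∀ t ∈ Set.Icc (0 : ℝ) 1,
      u (t • x + (1 - t) • y) = t * u x + (1 - t) * u y) ∧
  ∃ x ∈ X, ∃ y ∈ X, u x ≠ u y

/-- A niveloidal preference: Axioms A1 (weak order), A2 (monotonicity), A3 (Archimedean)
and A4 (weak C-independence). -/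
structure NiveloidalPref (𝓐 : Set (Set S)) (X : Set V)
    (R : (S → V) → (S → V) → Prop) : Prop where
  nontrivial : ∃ f ∈ Acts 𝓐 X, ∃ g ∈ Acts 𝓐 X, R f g ∧ ¬ R g f
  complete : ∀ f ∈ Acts 𝓐 X, ∀ g ∈ Acts 𝓐 X, R f g ∨ R g f
  transitive : ∀ f ∈ Acts 𝓐 X, ∀ g ∈ Acts 𝓐 X, ∀ h ∈ Acts 𝓐 X, R f g → R g h → R f h
  monotone : ∀ f ∈ Acts 𝓐 X, ∀ g ∈ Acts 𝓐 X,
    (∀ s : S, R (constAct (f s)) (constAct (g s))) → R f g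
  archimedean : ∀ f ∈ Acts 𝓐 X, ∀ g ∈ Acts 𝓐 X, ∀ h ∈ Acts 𝓐 X,
    (R f g ∧ ¬ R g f) → (R g h ∧ ¬ R h g) →
    ∃ α ∈ Set.Ioo (0 : ℝ) 1, ∃ β ∈ Set.Ioo (0 : ℝ) 1,
      (R (mix α f h) g ∧ ¬ R g (mix α f h)) ∧
      (R g (mix β f h) ∧ ¬ R (mix β f h) g)
  weakCIndep : ∀ f ∈ Acts 𝓐 X, ∀ g ∈ Acts 𝓐 X, ∀ x ∈ X, ∀ y ∈ X,
    ∀ α ∈ Set.Ioo (0 : ℝ) 1,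
    R (mix α f (constAct x)) (mix α g (constAct x)) →
    R (mix α f (constAct y)) (mix α g (constAct y))

/-- An invariant biseparable preference: Axioms A1 (weak order), A2 (monotonicity),
A3 (Archimedean) and A7 (C-independence). -/
structure IBPref (𝓐 : Set (Set S)) (X : Set V)
    (R : (S → V) → (S → V) → Prop) : Prop where
  nontrivial : ∃ f ∈ Acts 𝓐 X, ∃ g ∈ Acts 𝓐 X, R f g ∧ ¬ R g f
  complete : ∀ f ∈ Acts 𝓐 X, ∀ g ∈ Acts 𝓐 X, R f g ∨ R g f
  transitive : ∀ f ∈ Acts 𝓐 X, ∀ g ∈ Acts 𝓐 X, ∀ h ∈ Acts 𝓐 X, R f g → R g h → R f h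
  monotone : ∀ f ∈ Acts 𝓐 X, ∀ g ∈ Acts 𝓐 X,
    (∀ s : S, R (constAct (f s)) (constAct (g s))) → R f g
  archimedean : ∀ f ∈ Acts 𝓐 X, ∀ g ∈ Acts 𝓐 X, ∀ h ∈ Acts 𝓐 X,
    (R f g ∧ ¬ R g f) → (R g h ∧ ¬ R h g) →
    ∃ α ∈ Set.Ioo (0 : ℝ) 1, ∃ β ∈ Set.Ioo (0 : ℝ) 1,
      (R (mix α f h) g ∧ ¬ R g (mix α f h)) ∧
      (R g (mix β f h) ∧ ¬ R (mix β f h) g)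
  cIndep : ∀ f ∈ Acts 𝓐 X, ∀ g ∈ Acts 𝓐 X, ∀ x ∈ X, ∀ α ∈ Set.Ioo (0 : ℝ) 1,
    (R f g ↔ R (mix α f (constAct x)) (mix α g (constAct x)))

/-- Axiom A5 (uncertainty aversion). -/
def UncertaintyAverse (𝓐 : Set (Set S)) (X : Set V)
    (R : (S → V) → (S → V) → Prop) : Prop :=
  ∀ f ∈ Acts 𝓐 X, ∀ g ∈ Acts 𝓐 X, ∀ α ∈ Set.Ioo (0 : ℝ) 1,
    R f g → R g f → R (mix α f g) f

/-- `xf` assigns to every act a certainty equivalent. -/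
def IsCE (𝓐 : Set (Set S)) (X : Set V) (R : (S → V) → (S → V) → Prop)
    (xf : (S → V) → V) : Prop :=
  ∀ f ∈ Acts 𝓐 X, xf f ∈ X ∧ R f (constAct (xf f)) ∧ R (constAct (xf f)) f

/-- `C*`: the maximal candidate set of penalty functions. -/
def CstarOf (𝓐 : Set (Set S)) (X : Set V) (u : V → ℝ) (xf : (S → V) → V) :
    Set ((Set S → ℝ) → EReal) :=
  {c | c ∈ Cscr 𝓐 ∧ ∀ f ∈ Acts 𝓐 X, minVal 𝓐 c (uAct u f) ≤ (u (xf f) : EReal)}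

/-- `B*`: the maximal candidate set of reward functions. -/
def BstarOf (𝓐 : Set (Set S)) (X : Set V) (u : V → ℝ) (xf : (S → V) → V) :
    Set ((Set S → ℝ) → EReal) :=
  {b | b ∈ Cscr 𝓐 ∧ ∀ f ∈ Acts 𝓐 X, (u (xf f) : EReal) ≤ maxVal 𝓐 b (uAct u f)}

/-- `Pfam*`: the maximal family of prior sets (maxmin form). -/
def PstarOf (𝓐 : Set (Set S)) (X : Set V) (u : V → ℝ) (xf : (S → V) → V) :
    Set (Set (Set S → ℝ)) :=
  {P | P ⊆ Δset 𝓐 ∧ P.Nonempty ∧ Convex ℝ P ∧ (@IsCompact _ (weakStar 𝓐) P) ∧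
    ∀ f ∈ Acts 𝓐 X, minPVal P (uAct u f) ≤ (u (xf f) : EReal)}

/-- `Qfam*`: the maximal family of prior sets (minmax form). -/
def QstarOf (𝓐 : Set (Set S)) (X : Set V) (u : V → ℝ) (xf : (S → V) → V) :
    Set (Set (Set S → ℝ)) :=
  {Q | Q ⊆ Δset 𝓐 ∧ Q.Nonempty ∧ Convex ℝ Q ∧ (@IsCompact _ (weakStar 𝓐) Q) ∧
    ∀ f ∈ Acts 𝓐 X, (u (xf f) : EReal) ≤ maxQVal Q (uAct u f)}

/-- `C` yields the maxmin representation of `R` with utility `u`. -/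
def MaxminRep (𝓐 : Set (Set S)) (X : Set V) (R : (S → V) → (S → V) → Prop)
    (u : V → ℝ) (C : Set ((Set S → ℝ) → EReal)) : Prop :=
  ∀ f ∈ Acts 𝓐 X, ∀ g ∈ Acts 𝓐 X,
    (R f g ↔ maxminVal 𝓐 C (uAct u g) ≤ maxminVal 𝓐 C (uAct u f))

/-- All indicated maxima over `C` and minima over `Δ` are attained. -/
def MaxminAttained (𝓐 : Set (Set S)) (X : Set V) (u : V → ℝ)
    (C : Set ((Set S → ℝ) → EReal)) : Prop :=
  ∀ f ∈ Acts 𝓐 X,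
    (∀ c ∈ C, ∃ p ∈ Δset 𝓐,
      minVal 𝓐 c (uAct u f) = (fint p (uAct u f) : EReal) + c p) ∧
    ∃ c ∈ C, maxminVal 𝓐 C (uAct u f) = minVal 𝓐 c (uAct u f)

/-- `B` yields the minmax representation of `R` with utility `u`. -/
def MinmaxRep (𝓐 : Set (Set S)) (X : Set V) (R : (S → V) → (S → V) → Prop)
    (u : V → ℝ) (B : Set ((Set S → ℝ) → EReal)) : Prop :=
  ∀ f ∈ Acts 𝓐 X, ∀ g ∈ Acts 𝓐 X,
    (R f g ↔ minmaxVal 𝓐 B (uAct u g) ≤ minmaxVal 𝓐 B (uAct u f))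

/-- All indicated minima over `B` and maxima over `Δ` are attained. -/
def MinmaxAttained (𝓐 : Set (Set S)) (X : Set V) (u : V → ℝ)
    (B : Set ((Set S → ℝ) → EReal)) : Prop :=
  ∀ f ∈ Acts 𝓐 X,
    (∀ b ∈ B, ∃ q ∈ Δset 𝓐,
      maxVal 𝓐 b (uAct u f) = (fint q (uAct u f) : EReal) - b q) ∧
    ∃ b ∈ B, minmaxVal 𝓐 B (uAct u f) = maxVal 𝓐 b (uAct u f)

/-- A family of nonempty, convex, weak*-compact subsets of `Δ`. -/
def IsPriorFamily (𝓐 : Set (Set S)) (Pfam : Set (Set (Set S → ℝ))) : Prop :=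
  Pfam.Nonempty ∧ ∀ P ∈ Pfam,
    P ⊆ Δset 𝓐 ∧ P.Nonempty ∧ Convex ℝ P ∧ (@IsCompact _ (weakStar 𝓐) P)

/-- `Pfam` yields the maxmin representation of `R` with utility `u`. -/
def PRep (𝓐 : Set (Set S)) (X : Set V) (R : (S → V) → (S → V) → Prop)
    (u : V → ℝ) (Pfam : Set (Set (Set S → ℝ))) : Prop :=
  ∀ f ∈ Acts 𝓐 X, ∀ g ∈ Acts 𝓐 X,
    (R f g ↔ maxminPVal Pfam (uAct u g) ≤ maxminPVal Pfam (uAct u f))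

/-- All indicated maxima over `Pfam` and minima over `P` are attained. -/
def PAttained (𝓐 : Set (Set S)) (X : Set V) (u : V → ℝ)
    (Pfam : Set (Set (Set S → ℝ))) : Prop :=
  ∀ f ∈ Acts 𝓐 X,
    (∀ P ∈ Pfam, ∃ p ∈ P, minPVal P (uAct u f) = (fint p (uAct u f) : EReal)) ∧
    ∃ P ∈ Pfam, maxminPVal Pfam (uAct u f) = minPVal P (uAct u f)

/-- `Qfam` yields the minmax representation of `R` with utility `u`. -/
def QRep (𝓐 : Set (Set S)) (X : Set V) (R : (S → V) → (S → V) → Prop)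
    (u : V → ℝ) (Qfam : Set (Set (Set S → ℝ))) : Prop :=
  ∀ f ∈ Acts 𝓐 X, ∀ g ∈ Acts 𝓐 X,
    (R f g ↔ minmaxQVal Qfam (uAct u g) ≤ minmaxQVal Qfam (uAct u f))

/-- All indicated minima over `Qfam` and maxima over `Q` are attained. -/
def QAttained (𝓐 : Set (Set S)) (X : Set V) (u : V → ℝ)
    (Qfam : Set (Set (Set S → ℝ))) : Prop :=
  ∀ f ∈ Acts 𝓐 X,
    (∀ Q ∈ Qfam, ∃ q ∈ Q, maxQVal Q (uAct u f) = (fint q (uAct u f) : EReal)) ∧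
    ∃ Q ∈ Qfam, minmaxQVal Qfam (uAct u f) = maxQVal Q (uAct u f)

/-- `c₁ ≈_u c₂`: `c₁` and `c₂` induce the same variational functional on `B₀(Σ, u(X))`. -/
def ApproxEq (𝓐 : Set (Set S)) (X : Set V) (u : V → ℝ)
    (c₁ c₂ : (Set S → ℝ) → EReal) : Prop :=
  ∀ φ : S → ℝ, IsSimpleFn 𝓐 φ → (∀ s, φ s ∈ u '' X) →
    minVal 𝓐 c₁ φ = minVal 𝓐 c₂ φ

/-- `R₁` is more ambiguity averse than `R₂`. -/
def MoreAmbiguityAverse (𝓐 : Set (Set S)) (X : Set V)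
    (R₁ R₂ : (S → V) → (S → V) → Prop) : Prop :=
  ∀ f ∈ Acts 𝓐 X, ∀ x ∈ X, R₂ (constAct x) f → R₁ (constAct x) f

/-- `u₁` and `u₂` are positive affine transformations of each other on `X`. -/
def CardEquiv (X : Set V) (u₁ u₂ : V → ℝ) : Prop :=
  ∃ a b : ℝ, 0 < a ∧ ∀ x ∈ X, u₂ x = a * u₁ x + b

/-- A capacity on `(S, Σ)`. -/
def IsCapacity (𝓐 : Set (Set S)) (π : Set S → ℝ) : Prop :=
  π ∅ = 0 ∧ π Set.univ = 1 ∧ ∀ A ∈ 𝓐, ∀ B ∈ 𝓐, A ⊆ B → π A ≤ π B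

/-- The Choquet integral of a (simple) function against a capacity. -/
noncomputable def choquet (π : Set S → ℝ) (φ : S → ℝ) : ℝ :=
  (∫ t in Set.Ioi (0 : ℝ), π {s | t ≤ φ s}) +
    ∫ t in Set.Iio (0 : ℝ), (π {s | t ≤ φ s} - 1)

noncomputable def _root_.EReal.addLeftOrderIso (r : ℝ) : EReal ≃o EReal where
  toFun x := (r : EReal) + x
  invFun x := x - (r : EReal)
  left_inv x := by
    simp only
    rw [add_comm]
    exact EReal.add_sub_cancel_right
  right_inv x := by
    simp only
    rw [add_comm]
    exact EReal.sub_add_cancel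
  map_rel_iff' {a b} := by
    simp only [Equiv.coe_fn_mk]
    exact (EReal.addLECancellable_coe r).add_le_add_iff_left

theorem _root_.EReal.coe_add_biInf {ι : Type*} (r : ℝ) (s : Set ι) (f : ι → EReal) :
    (r : EReal) + ⨅ i ∈ s, f i = ⨅ i ∈ s, ((r : EReal) + f i) :=
  (EReal.addLeftOrderIso r).map_iInf₂ _

theorem _root_.EReal.coe_add_biSup {ι : Type*} (r : ℝ) (s : Set ι) (f : ι → EReal) :
    (r : EReal) + ⨆ i ∈ s, f i = ⨆ i ∈ s, ((r : EReal) + f i) :=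
  (EReal.addLeftOrderIso r).map_iSup₂ _

theorem _root_.EReal.nonpos_of_coe_add_le {r : ℝ} {x : EReal} (h : (r : EReal) + x ≤ r) :
    x ≤ 0 :=
  (EReal.addLeftOrderIso r).le_iff_le.mp (by simpa [EReal.addLeftOrderIso] using h)

section

open Set Topology

omit [AddCommGroup V] [Module ℝ V]

variable {𝓐 : Set (Set S)}

theorem IsSetAlg.univ_mem (hA : IsSetAlg 𝓐) : univ ∈ 𝓐 := by
  simpa using hA.compl_mem ∅ hA.empty_mem

theorem IsSetAlg.biUnion_mem (hA : IsSetAlg 𝓐) {ι : Type*} {s : Set ι} (hs : s.Finite)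
    {g : ι → Set S} (hg : ∀ i ∈ s, g i ∈ 𝓐) : (⋃ i ∈ s, g i) ∈ 𝓐 := by
  induction s, hs using Set.Finite.induction_on with
  | empty => simpa using hA.empty_mem
  | @insert a s _ _ ih =>
    rw [Set.biUnion_insert]
    exact hA.union_mem _ (hg a (mem_insert a s)) _ (ih fun i hi => hg i (mem_insert_of_mem a hi))

theorem measure_empty_of_mem_Δset (hA : IsSetAlg 𝓐) {p : Set S → ℝ} (hp : p ∈ Δset 𝓐) :
    p ∅ = 0 := by
  have h := hp.2.2.1 ∅ hA.empty_mem ∅ hA.empty_mem (disjoint_empty _)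
  rw [union_empty] at h
  linarith

theorem le_one_of_mem_Δset (hA : IsSetAlg 𝓐) {p : Set S → ℝ} (hp : p ∈ Δset 𝓐)
    {A : Set S} (hm : A ∈ 𝓐) : p A ≤ 1 := by
  have h := hp.2.2.1 A hm Aᶜ (hA.compl_mem A hm) disjoint_compl_right
  rw [union_compl_self, hp.1] at h
  linarith [hp.2.1 Aᶜ (hA.compl_mem A hm)]

open Classical in
theorem Δset_nonempty [Nonempty S] (hA : IsSetAlg 𝓐) : (Δset 𝓐).Nonempty := by
  obtain ⟨s₀⟩ := ‹Nonempty S›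
  refine ⟨fun A => if A ∈ 𝓐 ∧ s₀ ∈ A then 1 else 0, by simp [hA.univ_mem], ?_, ?_, ?_⟩
  · intro A _
    dsimp only
    split_ifs <;> norm_num
  · intro A hmA B hmB hd
    have hu : A ∪ B ∈ 𝓐 := hA.union_mem A hmA B hmB
    by_cases h₁ : s₀ ∈ A
    · have h₂ : s₀ ∉ B := disjoint_left.mp hd h₁
      simp [hmA, hmB, hu, h₁, h₂]
    · by_cases h₂ : s₀ ∈ B <;> simp [hmA, hmB, hu, h₁, h₂]
  · intro A hm
    simp [hm]

theorem fint_eq_sum_of_subset {p : Set S → ℝ} (h₀ : p ∅ = 0) {φ : S → ℝ}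
    (hfin : (range φ).Finite) {T : Finset ℝ} (hT : range φ ⊆ T) :
    fint p φ = ∑ t ∈ T, t * p (φ ⁻¹' {t}) := by
  rw [fint, dif_pos hfin]
  refine Finset.sum_subset (fun t ht => hT (hfin.mem_toFinset.mp ht)) fun t _ hnt => ?_
  rw [preimage_singleton_eq_empty.mpr fun h => hnt (hfin.mem_toFinset.mpr h), h₀, mul_zero]

theorem fint_const [Nonempty S] (hA : IsSetAlg 𝓐) {p : Set S → ℝ} (hp : p ∈ Δset 𝓐)
    (t : ℝ) : fint p (fun _ : S => t) = t := by
  rw [fint_eq_sum_of_subset (measure_empty_of_mem_Δset hA hp)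
    ((finite_singleton t).subset range_const_subset) (T := {t}) (by simp),
    Finset.sum_singleton, preimage_const_of_mem (mem_singleton t), hp.1, mul_one]

theorem abs_fint_le (hA : IsSetAlg 𝓐) {p : Set S → ℝ} (hp : p ∈ Δset 𝓐) {φ : S → ℝ}
    (hφ : IsSimpleFn 𝓐 φ) : |fint p φ| ≤ ∑ t ∈ hφ.1.toFinset, |t| := by
  rw [fint, dif_pos hφ.1]
  refine (Finset.abs_sum_le_sum_abs _ _).trans (Finset.sum_le_sum fun t _ => ?_)
  rw [abs_mul, abs_of_nonneg (hp.2.1 _ (hφ.2 t))]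
  exact mul_le_of_le_one_right (abs_nonneg t) (le_one_of_mem_Δset hA hp (hφ.2 t))

theorem isSimpleFn_indicator_one (hA : IsSetAlg 𝓐) {A : Set S} (hm : A ∈ 𝓐) :
    IsSimpleFn 𝓐 (A.indicator 1) := by
  refine ⟨((finite_singleton (1 : ℝ)).insert 0).subset ?_, fun t => ?_⟩
  · rintro _ ⟨s, rfl⟩
    by_cases h : s ∈ A <;> simp [h]
  · rcases indicator_one_preimage A {t} with h | h | h | h <;> rw [h]
    exacts [hA.univ_mem, hm, hA.compl_mem A hm, hA.empty_mem]

theorem fint_indicator_one (hA : IsSetAlg 𝓐) {p : Set S → ℝ} (hp : p ∈ Δset 𝓐)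
    {A : Set S} (hm : A ∈ 𝓐) : fint p (A.indicator 1) = p A := by
  have hT : range (A.indicator (1 : S → ℝ)) ⊆ ({0, 1} : Finset ℝ) := by
    rintro _ ⟨s, rfl⟩
    by_cases h : s ∈ A <;> simp [h]
  have hA₁ : A.indicator (1 : S → ℝ) ⁻¹' {1} = A := by
    ext s
    by_cases h : s ∈ A <;> simp [h]
  rw [fint_eq_sum_of_subset (measure_empty_of_mem_Δset hA hp)
    (isSimpleFn_indicator_one hA hm).1 hT, Finset.sum_pair zero_ne_one, hA₁]
  ring

theorem constAct_mem_Acts (hA : IsSetAlg 𝓐) {X : Set V} {x : V} (hx : x ∈ X) :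
    constAct x ∈ Acts 𝓐 X := by
  refine ⟨fun _ => hx, (finite_singleton x).subset range_const_subset, fun v => ?_⟩
  unfold constAct
  by_cases h : x = v
  · rw [preimage_const_of_mem (mem_singleton_iff.mpr h)]
    exact hA.univ_mem
  · rw [preimage_const_of_notMem (mt mem_singleton_iff.mp h)]
    exact hA.empty_mem

theorem uAct_constAct (u : V → ℝ) (x : V) : uAct u (constAct x : S → V) = fun _ => u x := rfl

theorem isSimpleFn_uAct (hA : IsSetAlg 𝓐) {X : Set V} (u : V → ℝ) {f : S → V}
    (hf : f ∈ Acts 𝓐 X) : IsSimpleFn 𝓐 (uAct u f) := by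
  obtain ⟨-, hfin, hpre⟩ := hf
  refine ⟨range_comp u f ▸ hfin.image u, fun t => ?_⟩
  have h : uAct u f ⁻¹' {t} = ⋃ v ∈ range f ∩ u ⁻¹' {t}, f ⁻¹' {v} := by
    ext s
    simp [uAct]
  rw [h]
  exact hA.biUnion_mem (hfin.inter_of_left _) fun v _ => hpre v

noncomputable def evalSimple (𝓐 : Set (Set S)) (p : Set S → ℝ) :
    {φ : S → ℝ // IsSimpleFn 𝓐 φ} → ℝ :=
  fun φ => fint p φ.1

open Classical in
noncomputable def recoverMeasure (hA : IsSetAlg 𝓐) (y : {φ : S → ℝ // IsSimpleFn 𝓐 φ} → ℝ) :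
    Set S → ℝ :=
  fun A => if hm : A ∈ 𝓐 then y ⟨A.indicator 1, isSimpleFn_indicator_one hA hm⟩ else 0

theorem recoverMeasure_evalSimple (hA : IsSetAlg 𝓐) {p : Set S → ℝ} (hp : p ∈ Δset 𝓐) :
    recoverMeasure hA (evalSimple 𝓐 p) = p := by
  funext A
  by_cases hm : A ∈ 𝓐
  · simp [recoverMeasure, evalSimple, hm, fint_indicator_one hA hp hm]
  · simp [recoverMeasure, hm, hp.2.2.2 A hm]

theorem continuous_recoverMeasure (hA : IsSetAlg 𝓐) : Continuous (recoverMeasure hA) :=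
  continuous_pi fun A => by
    by_cases hm : A ∈ 𝓐
    · simpa [recoverMeasure, hm] using continuous_apply _
    · simpa [recoverMeasure, hm] using continuous_const

theorem continuous_fint (φ : S → ℝ) : Continuous fun p : Set S → ℝ => fint p φ := by
  unfold fint
  split_ifs
  · exact continuous_finsetSum _ fun t _ => continuous_const.mul (continuous_apply _)
  · exact continuous_const

theorem isClosed_Δset : IsClosed (Δset 𝓐) := by
  simp only [Δset, ofPred_and, ofPred_forall]
  refine (isClosed_eq (continuous_apply _) continuous_const).inter
    (IsClosed.inter ?_ (IsClosed.inter ?_ ?_))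
  · exact isClosed_iInter fun A => isClosed_iInter fun _ =>
      isClosed_le continuous_const (continuous_apply A)
  · exact isClosed_iInter fun A => isClosed_iInter fun _ => isClosed_iInter fun B =>
      isClosed_iInter fun _ => isClosed_iInter fun _ =>
      isClosed_eq (continuous_apply (A ∪ B)) ((continuous_apply A).add (continuous_apply B))
  · exact isClosed_iInter fun A => isClosed_iInter fun _ =>
      isClosed_eq (continuous_apply A) continuous_const

/-- Banach–Alaoglu: `evalSimple` maps `Δ` onto a closed subset of a product of compact
intervals, closed because `recoverMeasure` inverts `evalSimple` on `Δ`. -/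
theorem isCompact_Δset (hA : IsSetAlg 𝓐) : @IsCompact _ (weakStar 𝓐) (Δset 𝓐) := by
  rw [@IsInducing.isCompact_iff _ _ (weakStar 𝓐) _ _ _
    (@IsInducing.mk _ _ (weakStar 𝓐) _ (evalSimple 𝓐) rfl)]
  have himage : evalSimple 𝓐 '' Δset 𝓐 =
      recoverMeasure hA ⁻¹' Δset 𝓐 ∩ {y | evalSimple 𝓐 (recoverMeasure hA y) = y} := by
    ext y
    constructor
    · rintro ⟨p, hp, rfl⟩
      simp [recoverMeasure_evalSimple hA hp, hp]
    · rintro ⟨hy, hyeq⟩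
      exact ⟨_, hy, hyeq⟩
  refine IsCompact.of_isClosed_subset
    (isCompact_univ_pi fun φ : {φ : S → ℝ // IsSimpleFn 𝓐 φ} =>
      isCompact_Icc (a := -∑ t ∈ φ.2.1.toFinset, |t|) (b := ∑ t ∈ φ.2.1.toFinset, |t|))
    ?_ ?_
  · rw [himage]
    exact (isClosed_Δset.preimage (continuous_recoverMeasure hA)).inter
      (isClosed_eq (continuous_pi fun φ => (continuous_fint φ.1).comp
        (continuous_recoverMeasure hA)) continuous_id)
  · rintro _ ⟨p, hp, rfl⟩ φ -
    exact abs_le.mp (abs_fint_le hA hp φ.2)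

theorem continuous_fint_weakStar {φ : S → ℝ} (hφ : IsSimpleFn 𝓐 φ) :
    @Continuous _ _ (weakStar 𝓐) _ fun p => fint p φ := by
  let _ := weakStar 𝓐
  exact (continuous_apply (A := fun _ : {φ : S → ℝ // IsSimpleFn 𝓐 φ} => ℝ) ⟨φ, hφ⟩).comp
    (continuous_induced_dom (f := evalSimple 𝓐))

theorem exists_minVal_eq [Nonempty S] (hA : IsSetAlg 𝓐) {c : (Set S → ℝ) → EReal}
    (hc : c ∈ Cscr 𝓐) {φ : S → ℝ} (hφ : IsSimpleFn 𝓐 φ) :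
    ∃ p ∈ Δset 𝓐, minVal 𝓐 c φ = (fint p φ : EReal) + c p := by
  let _ := weakStar 𝓐
  have hlsc : LowerSemicontinuousOn (fun p => (fint p φ : EReal) + c p) (Δset 𝓐) :=
    (continuous_coe_real_ereal.comp (continuous_fint_weakStar hφ)).lowerSemicontinuous
      |>.lowerSemicontinuousOn _ |>.add' hc.2.1 fun _ _ =>
        EReal.continuousAt_add (Or.inl (EReal.coe_ne_top _)) (Or.inl (EReal.coe_ne_bot _))
  obtain ⟨p, hp, hmin⟩ := hlsc.exists_isMinOn (Δset_nonempty hA) (isCompact_Δset hA)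
  exact ⟨p, hp, le_antisymm (iInf₂_le p hp) (le_iInf₂ fun q hq => hmin hq)⟩

theorem minVal_const [Nonempty S] (hA : IsSetAlg 𝓐) (c : (Set S → ℝ) → EReal) (t : ℝ) :
    minVal 𝓐 c (fun _ => t) = t + ⨅ p ∈ Δset 𝓐, c p := by
  rw [EReal.coe_add_biInf, minVal]
  exact iInf_congr fun p => iInf_congr fun hp => by rw [fint_const hA hp]

theorem maxminVal_const [Nonempty S] (hA : IsSetAlg 𝓐) {C : Set ((Set S → ℝ) → EReal)}
    (hC : Grounded 𝓐 C) (t : ℝ) : maxminVal 𝓐 C (fun _ => t) = t := by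
  unfold Grounded at hC
  simp only [maxminVal, minVal_const hA, ← EReal.coe_add_biSup, hC, add_zero]

theorem maxminVal_mono {C C' : Set ((Set S → ℝ) → EReal)} (h : C ⊆ C') (φ : S → ℝ) :
    maxminVal 𝓐 C φ ≤ maxminVal 𝓐 C' φ :=
  biSup_mono h

variable [Nonempty S] {X : Set V} {R : (S → V) → (S → V) → Prop} {u : V → ℝ}
  {xf : (S → V) → V} {C : Set ((Set S → ℝ) → EReal)}

theorem MaxminRep.maxminVal_eq (hA : IsSetAlg 𝓐) (hrep : MaxminRep 𝓐 X R u C)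
    (hC : Grounded 𝓐 C) (hxf : IsCE 𝓐 X R xf) {f : S → V} (hf : f ∈ Acts 𝓐 X) :
    maxminVal 𝓐 C (uAct u f) = u (xf f) := by
  obtain ⟨hxX, hfx, hxf'⟩ := hxf f hf
  have hx := constAct_mem_Acts hA hxX
  have h₁ := (hrep f hf _ hx).mp hfx
  have h₂ := (hrep _ hx f hf).mp hxf'
  rw [uAct_constAct, maxminVal_const hA hC] at h₁ h₂
  exact le_antisymm h₂ h₁

theorem subset_CstarOf (hA : IsSetAlg 𝓐) (hCsub : C ⊆ Cscr 𝓐) (hC : Grounded 𝓐 C)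
    (hrep : MaxminRep 𝓐 X R u C) (hxf : IsCE 𝓐 X R xf) : C ⊆ CstarOf 𝓐 X u xf :=
  fun c hc => ⟨hCsub hc, fun f hf =>
    hrep.maxminVal_eq hA hC hxf hf ▸
      le_iSup₂ (f := fun c (_ : c ∈ C) => minVal 𝓐 c (uAct u f)) c hc⟩

theorem maxminVal_CstarOf (hA : IsSetAlg 𝓐) (hCsub : C ⊆ Cscr 𝓐) (hC : Grounded 𝓐 C)
    (hrep : MaxminRep 𝓐 X R u C) (hxf : IsCE 𝓐 X R xf) {f : S → V} (hf : f ∈ Acts 𝓐 X) :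
    maxminVal 𝓐 (CstarOf 𝓐 X u xf) (uAct u f) = u (xf f) :=
  le_antisymm (iSup₂_le fun _ hc => hc.2 f hf)
    (hrep.maxminVal_eq hA hC hxf hf ▸ maxminVal_mono (subset_CstarOf hA hCsub hC hrep hxf) _)

theorem grounded_CstarOf (hA : IsSetAlg 𝓐) (hX : X.Nonempty) (hCsub : C ⊆ Cscr 𝓐)
    (hC : Grounded 𝓐 C) (hrep : MaxminRep 𝓐 X R u C) (hxf : IsCE 𝓐 X R xf) :
    Grounded 𝓐 (CstarOf 𝓐 X u xf) := by
  obtain ⟨x, hx⟩ := hX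
  have hconst := constAct_mem_Acts hA hx
  refine le_antisymm (iSup₂_le fun c hc => ?_)
    (hC ▸ biSup_mono (subset_CstarOf hA hCsub hC hrep hxf))
  have h := hc.2 _ hconst
  rw [← hrep.maxminVal_eq hA hC hxf hconst, uAct_constAct, maxminVal_const hA hC,
    minVal_const hA] at h
  exact EReal.nonpos_of_coe_add_le h

theorem maxminAttained_CstarOf (hA : IsSetAlg 𝓐) (hCsub : C ⊆ Cscr 𝓐) (hC : Grounded 𝓐 C)
    (hatt : MaxminAttained 𝓐 X u C) (hrep : MaxminRep 𝓐 X R u C) (hxf : IsCE 𝓐 X R xf) :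
    MaxminAttained 𝓐 X u (CstarOf 𝓐 X u xf) := by
  intro f hf
  refine ⟨fun c hc => exists_minVal_eq hA hc.1 (isSimpleFn_uAct hA u hf), ?_⟩
  obtain ⟨c, hc, heq⟩ := (hatt f hf).2
  refine ⟨c, subset_CstarOf hA hCsub hC hrep hxf hc, ?_⟩
  rw [maxminVal_CstarOf hA hCsub hC hrep hxf hf, ← heq, hrep.maxminVal_eq hA hC hxf hf]

theorem maxminRep_CstarOf (hA : IsSetAlg 𝓐) (hCsub : C ⊆ Cscr 𝓐) (hC : Grounded 𝓐 C)
    (hrep : MaxminRep 𝓐 X R u C) (hxf : IsCE 𝓐 X R xf) :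
    MaxminRep 𝓐 X R u (CstarOf 𝓐 X u xf) := by
  intro f hf g hg
  rw [maxminVal_CstarOf hA hCsub hC hrep hxf hf, maxminVal_CstarOf hA hCsub hC hrep hxf hg,
    ← hrep.maxminVal_eq hA hC hxf hf, ← hrep.maxminVal_eq hA hC hxf hg]
  exact hrep f hf g hg

end

theorem stmt2_general {S V : Type*} [Nonempty S] [AddCommGroup V] [Module ℝ V]
    (𝓐 : Set (Set S)) (hA : IsSetAlg 𝓐)
    (X : Set V) (hX : X.Nonempty)
    (R : (S → V) → (S → V) → Prop)
    (u : V → ℝ)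
    (hrep : ∃ C ⊆ Cscr 𝓐, Grounded 𝓐 C ∧ MaxminAttained 𝓐 X u C ∧
      MaxminRep 𝓐 X R u C)
    (xf : (S → V) → V) (hxf : IsCE 𝓐 X R xf) :
    Grounded 𝓐 (CstarOf 𝓐 X u xf) ∧
    (∀ f ∈ Acts 𝓐 X,
      maxminVal 𝓐 (CstarOf 𝓐 X u xf) (uAct u f) = (u (xf f) : EReal)) ∧
    MaxminAttained 𝓐 X u (CstarOf 𝓐 X u xf) ∧
    MaxminRep 𝓐 X R u (CstarOf 𝓐 X u xf) ∧
    ∀ C ⊆ Cscr 𝓐, Grounded 𝓐 C → MaxminAttained 𝓐 X u C → MaxminRep 𝓐 X R u C →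
      C ⊆ CstarOf 𝓐 X u xf := by
  obtain ⟨C, hCsub, hC, hatt, hrepC⟩ := hrep
  exact ⟨grounded_CstarOf hA hX hCsub hC hrepC hxf,
    fun f hf => maxminVal_CstarOf hA hCsub hC hrepC hxf hf,
    maxminAttained_CstarOf hA hCsub hC hatt hrepC hxf,
    maxminRep_CstarOf hA hCsub hC hrepC hxf,
    fun C' hC'sub hC' _ hrep' => subset_CstarOf hA hC'sub hC' hrep' hxf⟩

theorem stmt2 {S V : Type*} [Nonempty S] [AddCommGroup V] [Module ℝ V]
    (𝓐 : Set (Set S)) (hA : IsSetAlg 𝓐)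
    (X : Set V) (hX : X.Nonempty) (hXc : Convex ℝ X)
    (R : (S → V) → (S → V) → Prop) (hpref : NiveloidalPref 𝓐 X R)
    (u : V → ℝ) (hu : IsNonconstAffine X u) (h0 : (0 : ℝ) ∈ interior (u '' X))
    (hrep : ∃ C ⊆ Cscr 𝓐, Grounded 𝓐 C ∧ MaxminAttained 𝓐 X u C ∧
      MaxminRep 𝓐 X R u C)
    (xf : (S → V) → V) (hxf : IsCE 𝓐 X R xf) :
    Grounded 𝓐 (CstarOf 𝓐 X u xf) ∧
    (∀ f ∈ Acts 𝓐 X,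
      maxminVal 𝓐 (CstarOf 𝓐 X u xf) (uAct u f) = (u (xf f) : EReal)) ∧
    MaxminAttained 𝓐 X u (CstarOf 𝓐 X u xf) ∧
    MaxminRep 𝓐 X R u (CstarOf 𝓐 X u xf) ∧
    ∀ C ⊆ Cscr 𝓐, Grounded 𝓐 C → MaxminAttained 𝓐 X u C → MaxminRep 𝓐 X R u C →
      C ⊆ CstarOf 𝓐 X u xf :=
  stmt2_general 𝓐 hA X hX R u hrep xf hxf

end Paper
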